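/- Let Q be a finite quiver with vertex set Q₀ = {1,…,n}. The path algebra kQ, equipped with Δ(p) = p ⊗ p and ε(p) = 1 for every path p (including trivial paths eᵢ), is a weak bialgebra. It is a bialgebra if and only if Q has exactly one vertex. -/

import Mathlib

open TensorProduct LinearMap

namespace WeakBialgebraRaw

variable (k : Type*) [Field k] (A : Type*) [AddCommGroup A] [Module k A]

/-- The multiplication induced on `A ⊗ A` by a bilinear multiplication on `A`:
`(a ⊗ b)·(c ⊗ d) = ac ⊗ bd`. -/
noncomputable def mulT (mul : A →ₗ[k] A →ₗ[k] A) :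
    (A ⊗[k] A) →ₗ[k] (A ⊗[k] A) →ₗ[k] (A ⊗[k] A) :=
  TensorProduct.lift ((TensorProduct.mapBilinear (RingHom.id k) A A A A).compl₁₂ mul mul)

/-- The multiplication induced on `(A ⊗ A) ⊗ A`. -/
noncomputable def mulT3 (mul : A →ₗ[k] A →ₗ[k] A) :
    ((A ⊗[k] A) ⊗[k] A) →ₗ[k] ((A ⊗[k] A) ⊗[k] A) →ₗ[k] ((A ⊗[k] A) ⊗[k] A) :=
  TensorProduct.lift
    ((TensorProduct.mapBilinear (RingHom.id k) (A ⊗[k] A) A (A ⊗[k] A) A).compl₁₂ (mulT k A mul) mul)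

/-- `ε ⊗ ε` followed by multiplication of scalars. -/
noncomputable def counit2 (counit : A →ₗ[k] k) : A ⊗[k] A →ₗ[k] k :=
  (LinearMap.mul' k k) ∘ₗ TensorProduct.map counit counit

/-- The weak bialgebra axioms for the data `(A, mul, one, comul, counit)`:
`(A, mul, one)` is an associative unital algebra, `(A, comul, counit)` is a coassociative
counital coalgebra, comultiplication is multiplicative, the counit is weakly multiplicative
(`ε(abc) = ε(ab₁)ε(b₂c) = ε(ab₂)ε(b₁c)`), and the unit is weakly comultiplicative
(`Δ²(1) = (Δ(1)⊗1)(1⊗Δ(1)) = (1⊗Δ(1))(Δ(1)⊗1)`). -/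
structure IsWeakBialgebra (mul : A →ₗ[k] A →ₗ[k] A) (one : A)
    (comul : A →ₗ[k] A ⊗[k] A) (counit : A →ₗ[k] k) : Prop where
  mul_assoc : ∀ a b c : A, mul (mul a b) c = mul a (mul b c)
  one_mul : ∀ a : A, mul one a = a
  mul_one : ∀ a : A, mul a one = a
  coassoc : ∀ a : A, rTensor A comul (comul a)
    = (TensorProduct.assoc k A A A).symm (lTensor A comul (comul a))
  counit_left : ∀ a : A, (TensorProduct.lid k A) (rTensor A counit (comul a)) = a
  counit_right : ∀ a : A, (TensorProduct.rid k A) (lTensor A counit (comul a)) = a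
  comul_mul : ∀ a b : A, comul (mul a b) = mulT k A mul (comul a) (comul b)
  counit_weak : ∀ a b c : A, counit (mul (mul a b) c)
    = counit2 k A counit
        (mulT k A mul (mulT k A mul (a ⊗ₜ[k] one) (comul b)) (one ⊗ₜ[k] c))
  counit_weak' : ∀ a b c : A, counit (mul (mul a b) c)
    = counit2 k A counit
        (mulT k A mul (mulT k A mul (one ⊗ₜ[k] a) (comul b)) (c ⊗ₜ[k] one))
  comul_one : rTensor A comul (comul one)
    = mulT3 k A mul (comul one ⊗ₜ[k] one)
        ((TensorProduct.assoc k A A A).symm (one ⊗ₜ[k] comul one))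
  comul_one' : rTensor A comul (comul one)
    = mulT3 k A mul ((TensorProduct.assoc k A A A).symm (one ⊗ₜ[k] comul one))
        (comul one ⊗ₜ[k] one)

/-- The source counital map `ε_s(x) = 1₁ ε(x 1₂)`. -/
noncomputable def epsS (mul : A →ₗ[k] A →ₗ[k] A) (one : A)
    (comul : A →ₗ[k] A ⊗[k] A) (counit : A →ₗ[k] k) : A → A :=
  fun x => (TensorProduct.rid k A) (lTensor A (counit ∘ₗ mul x) (comul one))

/-- The target counital map `ε_t(x) = ε(1₁ x) 1₂`. -/
noncomputable def epsT (mul : A →ₗ[k] A →ₗ[k] A) (one : A)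
    (comul : A →ₗ[k] A ⊗[k] A) (counit : A →ₗ[k] k) : A → A :=
  fun x => (TensorProduct.lid k A) (rTensor A (counit ∘ₗ mul.flip x) (comul one))

/-- The weak Hopf algebra axioms: a weak bialgebra together with an antipode `S`
satisfying `S(h₁)h₂ = ε_s(h)`, `h₁S(h₂) = ε_t(h)` and `S(h₁)h₂S(h₃) = S(h)`. -/
structure IsWeakHopf (mul : A →ₗ[k] A →ₗ[k] A) (one : A)
    (comul : A →ₗ[k] A ⊗[k] A) (counit : A →ₗ[k] k) (S : A →ₗ[k] A) : Prop where
  toIsWeakBialgebra : IsWeakBialgebra k A mul one comul counit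
  antipode_s : ∀ h : A, TensorProduct.lift mul (rTensor A S (comul h))
    = epsS k A mul one comul counit h
  antipode_t : ∀ h : A, TensorProduct.lift mul (lTensor A S (comul h))
    = epsT k A mul one comul counit h
  antipode_mid : ∀ h : A, TensorProduct.lift mul (rTensor A (TensorProduct.lift mul)
      (TensorProduct.map (rTensor A S) S (rTensor A comul (comul h)))) = S h

/-- `(A, mul, one, comul, counit)` is a bialgebra: the counit is multiplicative and
`Δ(1) = 1 ⊗ 1`. -/
def IsBialgebra (mul : A →ₗ[k] A →ₗ[k] A) (one : A)
    (comul : A →ₗ[k] A ⊗[k] A) (counit : A →ₗ[k] k) : Prop :=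
  (∀ a b : A, counit (mul a b) = counit a * counit b) ∧ comul one = one ⊗ₜ[k] one

/-- `(A, mul, one, comul, counit, S)` is a Hopf algebra: a bialgebra whose antipode
satisfies `S(h₁)h₂ = ε(h)1 = h₁S(h₂)`. -/
def IsHopf (mul : A →ₗ[k] A →ₗ[k] A) (one : A)
    (comul : A →ₗ[k] A ⊗[k] A) (counit : A →ₗ[k] k) (S : A →ₗ[k] A) : Prop :=
  IsWeakBialgebra k A mul one comul counit ∧ IsBialgebra k A mul one comul counit ∧
  (∀ h : A, TensorProduct.lift mul (rTensor A S (comul h)) = counit h • one) ∧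
  (∀ h : A, TensorProduct.lift mul (lTensor A S (comul h)) = counit h • one)

section PathAlgebra

universe u
variable (V : Type u) [Quiver.{u + 1} V] [DecidableEq V]

/-- The set of paths of the quiver `V` (with arbitrary endpoints). -/
abbrev PathsOf := Σ a b : V, Quiver.Path a b

/-- The underlying vector space of the path algebra `kQ`. -/
abbrev PathAlg := PathsOf V →₀ k

variable {V} in
/-- Transport of a path along an equality of its source. -/
def castPath {a a' b : V} (h : a = a') (p : Quiver.Path a b) : Quiver.Path a' b := h ▸ p

variable {k V} in
/-- The product of two basis paths: their concatenation when composable, `0` otherwise. -/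
noncomputable def pathCompδ (p q : PathsOf V) : PathAlg k V :=
  if h : q.1 = p.2.1 then
    Finsupp.single ⟨p.1, q.2.1, p.2.2.comp (castPath h q.2.2)⟩ (1 : k)
  else 0

/-- The multiplication of the path algebra `kQ` (concatenation of composable paths). -/
noncomputable def pathMul : PathAlg k V →ₗ[k] PathAlg k V →ₗ[k] PathAlg k V :=
  Finsupp.lsum k fun p =>
    LinearMap.toSpanSingleton k (PathAlg k V →ₗ[k] PathAlg k V)
      (Finsupp.lsum k fun q => LinearMap.toSpanSingleton k (PathAlg k V) (pathCompδ p q))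

/-- The unit `Σᵢ eᵢ` of the path algebra (requires finitely many vertices). -/
noncomputable def pathOne [Fintype V] : PathAlg k V :=
  ∑ v : V, Finsupp.single ⟨v, v, Quiver.Path.nil⟩ (1 : k)

/-- The comultiplication `Δ(p) = p ⊗ p` on the path algebra. -/
noncomputable def pathComul : PathAlg k V →ₗ[k] PathAlg k V ⊗[k] PathAlg k V :=
  Finsupp.lsum k fun p =>
    LinearMap.toSpanSingleton k (PathAlg k V ⊗[k] PathAlg k V)
      (Finsupp.single p (1 : k) ⊗ₜ[k] Finsupp.single p (1 : k))

/-- The counit `ε(p) = 1` on the path algebra. -/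
noncomputable def pathCounit : PathAlg k V →ₗ[k] k :=
  Finsupp.lsum k fun _ => (LinearMap.id : k →ₗ[k] k)

end PathAlgebra

/-! The paths form a basis of `kQ` of group-like elements (`Δ p = p ⊗ p`, `ε p = 1`), so `kQ`
is the standard coalgebra on this basis; since a product of two paths is again a path or `0`,
`Δ` is multiplicative. For paths `p q r`, `pqr ≠ 0` exactly when `pq ≠ 0` and `qr ≠ 0`, which is
the weak multiplicativity `ε(pqr) = ε(pq) ε(qr)`; as `Δ` is cocommutative, the second form of
that axiom follows from the first. The unit `1 = Σ eᵥ` is a sum of orthogonal idempotents and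
`Δ(1) = Σ eᵥ ⊗ eᵥ`, so both products in the weak comultiplicativity of `1` equal
`Σ eᵥ ⊗ eᵥ ⊗ eᵥ = Δ²(1)`. Finally `ε(e_a e_b) = ε(e_a) ε(e_b)` forces `a = b`, while with a single
vertex `ε` is multiplicative and `Δ(1) = 1 ⊗ 1`. -/

section TensorMultiplication

variable {k : Type*} [Field k] {A : Type*} [AddCommGroup A] [Module k A]

@[simp] lemma mulT_tmul (mul : A →ₗ[k] A →ₗ[k] A) (a b c d : A) :
    mulT k A mul (a ⊗ₜ b) (c ⊗ₜ d) = mul a c ⊗ₜ mul b d := by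
  simp [mulT]

@[simp] lemma mulT3_tmul (mul : A →ₗ[k] A →ₗ[k] A) (x y : A ⊗[k] A) (a b : A) :
    mulT3 k A mul (x ⊗ₜ a) (y ⊗ₜ b) = mulT k A mul x y ⊗ₜ mul a b := by
  simp [mulT3]

@[simp] lemma counit2_tmul (counit : A →ₗ[k] k) (a b : A) :
    counit2 k A counit (a ⊗ₜ b) = counit a * counit b := by
  simp [counit2]

lemma mulT_comm (mul : A →ₗ[k] A →ₗ[k] A) (x y : A ⊗[k] A) :
    mulT k A mul (TensorProduct.comm k A A x) (TensorProduct.comm k A A y)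
      = TensorProduct.comm k A A (mulT k A mul x y) := by
  induction x using TensorProduct.induction_on with
  | zero => simp
  | add x x' hx hx' => simp only [map_add, LinearMap.add_apply, hx, hx']
  | tmul a b =>
    induction y using TensorProduct.induction_on with
    | zero => simp
    | add y y' hy hy' => simp only [map_add, hy, hy']
    | tmul c d => simp

lemma counit2_comm (counit : A →ₗ[k] k) (x : A ⊗[k] A) :
    counit2 k A counit (TensorProduct.comm k A A x) = counit2 k A counit x := by
  induction x using TensorProduct.induction_on with
  | zero => simp
  | add x x' hx hx' => simp [hx, hx']
  | tmul a b => simp [mul_comm]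

lemma counit_weak'_of_comm_comul {mul : A →ₗ[k] A →ₗ[k] A} {one : A}
    {comul : A →ₗ[k] A ⊗[k] A} {counit : A →ₗ[k] k}
    (hcomm : ∀ b, TensorProduct.comm k A A (comul b) = comul b)
    (hweak : ∀ a b c : A, counit (mul (mul a b) c)
      = counit2 k A counit (mulT k A mul (mulT k A mul (a ⊗ₜ one) (comul b)) (one ⊗ₜ c)))
    (a b c : A) :
    counit (mul (mul a b) c)
      = counit2 k A counit (mulT k A mul (mulT k A mul (one ⊗ₜ a) (comul b)) (c ⊗ₜ one)) := by
  rw [hweak, ← counit2_comm, ← mulT_comm, ← mulT_comm, TensorProduct.comm_tmul,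
    TensorProduct.comm_tmul, hcomm]

end TensorMultiplication

section PathAlgebraLemmas

variable {k : Type*} [Field k] {V : Type u} [Quiver.{u + 1} V]

@[simp] lemma pathComul_single (p : PathsOf V) (c : k) :
    pathComul k V (Finsupp.single p c)
      = c • (Finsupp.single p (1 : k) ⊗ₜ Finsupp.single p (1 : k)) := by
  simp [pathComul]

@[simp] lemma pathCounit_single (p : PathsOf V) (c : k) :
    pathCounit k V (Finsupp.single p c) = c := by
  simp [pathCounit]

lemma pathComul_eq_comul : pathComul k V = Coalgebra.comul := by
  ext p : 2
  simp

lemma pathCounit_eq_counit : pathCounit k V = Coalgebra.counit := by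
  ext p : 2
  simp

@[simp] lemma castPath_rfl {a b : V} (p : Quiver.Path a b) : castPath rfl p = p := rfl

variable (k) in
noncomputable abbrev trivialPath (v : V) : PathAlg k V :=
  Finsupp.single ⟨v, v, Quiver.Path.nil⟩ 1

lemma pathComul_pathOne [Fintype V] :
    pathComul k V (pathOne k V) = ∑ v, trivialPath k v ⊗ₜ trivialPath k v := by
  simp [pathOne]

lemma rTensor_pathComul_pathComul_pathOne [Fintype V] :
    rTensor _ (pathComul k V) (pathComul k V (pathOne k V))
      = ∑ v, (trivialPath k v ⊗ₜ trivialPath k v) ⊗ₜ trivialPath k v := by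
  simp [pathComul_pathOne]

lemma pathComul_pathOne_of_subsingleton [Fintype V] [Subsingleton V] :
    pathComul k V (pathOne k V) = pathOne k V ⊗ₜ pathOne k V := by
  rw [pathComul_pathOne, pathOne, TensorProduct.sum_tmul]
  refine Finset.sum_congr rfl fun v _ => ?_
  rw [Fintype.sum_subsingleton (fun w => trivialPath k w) v]

variable [DecidableEq V]

@[simp] lemma pathMul_single_single (p q : PathsOf V) (c d : k) :
    pathMul k V (Finsupp.single p c) (Finsupp.single q d) = (c * d) • pathCompδ p q := by
  simp [pathMul, smul_smul]

lemma pathComul_pathCompδ (p q : PathsOf V) :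
    pathComul k V (pathCompδ p q) = pathCompδ p q ⊗ₜ pathCompδ p q := by
  unfold pathCompδ
  split_ifs <;> simp

lemma pathCounit_pathCompδ (p q : PathsOf V) :
    pathCounit k V (pathCompδ p q) = if q.1 = p.2.1 then 1 else 0 := by
  unfold pathCompδ
  split_ifs <;> simp

lemma trivialPath_mul_single (v : V) (p : PathsOf V) (c : k) :
    pathMul k V (trivialPath k v) (Finsupp.single p c)
      = if p.1 = v then Finsupp.single p c else 0 := by
  obtain ⟨a, b, p⟩ := p
  split_ifs with h
  · subst h
    simp [pathCompδ]
  · simp [pathCompδ, h]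

lemma single_mul_trivialPath (p : PathsOf V) (c : k) (v : V) :
    pathMul k V (Finsupp.single p c) (trivialPath k v)
      = if v = p.2.1 then Finsupp.single p c else 0 := by
  obtain ⟨a, b, p⟩ := p
  split_ifs with h
  · subst h
    simp [pathCompδ]
  · simp [pathCompδ, h]

lemma pathOne_mul [Fintype V] (x : PathAlg k V) : pathMul k V (pathOne k V) x = x := by
  suffices pathMul k V (pathOne k V) = LinearMap.id from LinearMap.congr_fun this x
  ext p : 2
  simp [pathOne, -pathMul_single_single, trivialPath_mul_single]

lemma mul_pathOne [Fintype V] (x : PathAlg k V) : pathMul k V x (pathOne k V) = x := by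
  suffices (pathMul k V).flip (pathOne k V) = LinearMap.id from LinearMap.congr_fun this x
  ext p : 2
  simp [pathOne, -pathMul_single_single, single_mul_trivialPath]

lemma pathMul_assoc (x y z : PathAlg k V) :
    pathMul k V (pathMul k V x y) z = pathMul k V x (pathMul k V y z) := by
  suffices (pathMul k V).compr₂ (pathMul k V)
      = (LinearMap.llcomp k _ _ _ ∘ₗ pathMul k V).compl₂ (pathMul k V) from
    LinearMap.congr_fun (LinearMap.congr_fun₂ this x y) z
  ext ⟨a, b, p⟩ ⟨b', c, q⟩ ⟨c', d, r⟩ : 6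
  rcases eq_or_ne b' b with rfl | hq <;> rcases eq_or_ne c' c with rfl | hr <;>
    simp [pathCompδ, Quiver.Path.comp_assoc, *]

lemma pathComul_mul (x y : PathAlg k V) :
    pathComul k V (pathMul k V x y)
      = mulT k _ (pathMul k V) (pathComul k V x) (pathComul k V y) := by
  suffices (pathMul k V).compr₂ (pathComul k V)
      = (mulT k _ (pathMul k V)).compl₁₂ (pathComul k V) (pathComul k V) from
    LinearMap.congr_fun₂ this x y
  ext p q : 4
  simp [pathComul_pathCompδ]

lemma pathCounit_mul_single_mul (q : PathsOf V) (x z : PathAlg k V) :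
    pathCounit k V (pathMul k V (pathMul k V x (Finsupp.single q 1)) z)
      = pathCounit k V (pathMul k V x (Finsupp.single q 1))
        * pathCounit k V (pathMul k V (Finsupp.single q 1) z) := by
  suffices ((pathMul k V).comp ((pathMul k V).flip (Finsupp.single q 1))).compr₂ (pathCounit k V)
      = (LinearMap.mul k k).compl₁₂ (pathCounit k V ∘ₗ (pathMul k V).flip (Finsupp.single q 1))
          (pathCounit k V ∘ₗ pathMul k V (Finsupp.single q 1)) from
    LinearMap.congr_fun₂ this x z
  obtain ⟨b', c, q⟩ := q
  ext ⟨a, b, p⟩ ⟨c', d, r⟩ : 4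
  rcases eq_or_ne b' b with rfl | hq <;> rcases eq_or_ne c' c with rfl | hr <;>
    simp [pathCompδ, *]

lemma pathCounit_weak [Fintype V] (x y z : PathAlg k V) :
    pathCounit k V (pathMul k V (pathMul k V x y) z)
      = counit2 k _ (pathCounit k V) (mulT k _ (pathMul k V)
          (mulT k _ (pathMul k V) (x ⊗ₜ pathOne k V) (pathComul k V y)) (pathOne k V ⊗ₜ z)) := by
  induction y using Finsupp.induction_linear with
  | zero => simp
  | add y y' hy hy' => simp only [map_add, LinearMap.add_apply, hy, hy']
  | single q c =>
    rw [← Finsupp.smul_single_one]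
    simp [-Finsupp.smul_single, pathOne_mul, mul_pathOne, pathCounit_mul_single_mul]

lemma trivialPath_mul_trivialPath (v w : V) :
    pathMul k V (trivialPath k v) (trivialPath k w) = if w = v then trivialPath k v else 0 := by
  rw [trivialPath_mul_single]
  split_ifs with h
  · subst h; rfl
  · rfl

lemma pathComul_pathOne_mulT3_left [Fintype V] :
    mulT3 k _ (pathMul k V) (pathComul k V (pathOne k V) ⊗ₜ pathOne k V)
        ((TensorProduct.assoc k _ _ _).symm (pathOne k V ⊗ₜ pathComul k V (pathOne k V)))
      = ∑ v, (trivialPath k v ⊗ₜ trivialPath k v) ⊗ₜ trivialPath k v := by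
  simp [-pathMul_single_single, pathComul_pathOne, TensorProduct.sum_tmul,
    TensorProduct.tmul_sum, TensorProduct.tmul_ite, TensorProduct.ite_tmul, pathOne_mul,
    mul_pathOne, trivialPath_mul_trivialPath]

lemma pathComul_pathOne_mulT3_right [Fintype V] :
    mulT3 k _ (pathMul k V)
        ((TensorProduct.assoc k _ _ _).symm (pathOne k V ⊗ₜ pathComul k V (pathOne k V)))
        (pathComul k V (pathOne k V) ⊗ₜ pathOne k V)
      = ∑ v, (trivialPath k v ⊗ₜ trivialPath k v) ⊗ₜ trivialPath k v := by
  simp [-pathMul_single_single, pathComul_pathOne, TensorProduct.sum_tmul,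
    TensorProduct.tmul_sum, TensorProduct.tmul_ite, TensorProduct.ite_tmul, pathOne_mul,
    mul_pathOne, trivialPath_mul_trivialPath]

lemma pathCounit_mul_of_subsingleton [Subsingleton V] (x y : PathAlg k V) :
    pathCounit k V (pathMul k V x y) = pathCounit k V x * pathCounit k V y := by
  suffices (pathMul k V).compr₂ (pathCounit k V)
      = (LinearMap.mul k k).compl₁₂ (pathCounit k V) (pathCounit k V) from
    LinearMap.congr_fun₂ this x y
  ext p q : 4
  simp [pathCounit_pathCompδ, Subsingleton.elim q.1 p.2.1]

lemma subsingleton_of_pathCounit_mul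
    (h : ∀ x y : PathAlg k V,
      pathCounit k V (pathMul k V x y) = pathCounit k V x * pathCounit k V y) :
    Subsingleton V := by
  refine ⟨fun a b => by_contra fun hab => ?_⟩
  simpa [pathCounit_pathCompδ, Ne.symm hab] using h (trivialPath k a) (trivialPath k b)

end PathAlgebraLemmas

theorem path_algebra_weak_bialgebra (V : Type u) [Quiver.{u + 1} V] [Fintype V]
    [DecidableEq V] :
    IsWeakBialgebra k (PathAlg k V) (pathMul k V) (pathOne k V) (pathComul k V)
      (pathCounit k V) ∧
    (IsBialgebra k (PathAlg k V) (pathMul k V) (pathOne k V) (pathComul k V)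
      (pathCounit k V) ↔ ∀ a b : V, a = b) := by
  have hcomm (x : PathAlg k V) : TensorProduct.comm k _ _ (pathComul k V x) = pathComul k V x := by
    rw [pathComul_eq_comul, Coalgebra.comm_comul]
  refine ⟨{
      mul_assoc := pathMul_assoc
      one_mul := pathOne_mul
      mul_one := mul_pathOne
      coassoc := fun x => by rw [pathComul_eq_comul, Coalgebra.coassoc_symm_apply]
      counit_left := fun x => by simp [pathComul_eq_comul, pathCounit_eq_counit]
      counit_right := fun x => by simp [pathComul_eq_comul, pathCounit_eq_counit]
      comul_mul := pathComul_mul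
      counit_weak := pathCounit_weak
      counit_weak' := counit_weak'_of_comm_comul hcomm pathCounit_weak
      comul_one := by
        rw [rTensor_pathComul_pathComul_pathOne, pathComul_pathOne_mulT3_left]
      comul_one' := by
        rw [rTensor_pathComul_pathComul_pathOne, pathComul_pathOne_mulT3_right] }, ?_⟩
  constructor
  · rintro ⟨hcounit, -⟩
    exact (subsingleton_of_pathCounit_mul hcounit).elim
  · intro hV
    have : Subsingleton V := ⟨hV⟩
    exact ⟨pathCounit_mul_of_subsingleton, pathComul_pathOne_of_subsingleton⟩

end WeakBialgebraRaw
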